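/- Let K be a field and A a small delta category, i.e., a skeletal category in which the only endomorphisms are the identities. Then the K-linearization K[A] admits a separability family if and only if A is a discrete category, i.e., every morphism of A is an identity morphism. -/

import Mathlib

/-!
Let `S` be a separability family. For `f : x ⟶ z`, write `f = (∑ᶠ y, comp (a x y)) ≫ f`; by
`compat`, the summand at `y` factors through `a z y`. So `f = 0` as soon as every `y` has
`a x y = 0` or `a z y = 0`. In `K[A]` with `A` a delta category and `x ≠ z`, `a x y` vanishes for
`y ≠ x` because `Hom(x, y)` or `Hom(y, x)` is empty, and `a z x` vanishes because a morphism
`x ⟶ z` excludes any morphism `z ⟶ x`. Hence every basis morphism `x ⟶ z` would be `0`.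
Conversely, if `A` is discrete, the endomorphisms of `K[A]` are scalars, so `a x x = 𝟙 ⊗ 𝟙`
(and `0` elsewhere) is a separability family.
-/

open CategoryTheory TensorProduct

/-- Composition as a `K`-linear map out of the tensor product of Hom spaces:
`h ⊗ k ↦ h ∘ k = k ≫ h`. -/
noncomputable def compMap (K : Type*) [Field K] {C : Type*} [Category C] [Preadditive C]
    [Linear K C] (X Y Z : C) : ((Z ⟶ X) ⊗[K] (Y ⟶ Z)) →ₗ[K] (Y ⟶ X) :=
  TensorProduct.lift (LinearMap.mk₂ K (fun (h : Z ⟶ X) (k : Y ⟶ Z) => k ≫ h)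
    (fun h h' k => by simp) (fun r h k => by simp)
    (fun h k k' => by simp) (fun r h k => by simp))

/-- A separability family for a `K`-linear category `C`. -/
structure SeparabilityFamily (K : Type*) [Field K] (C : Type*) [Category C] [Preadditive C]
    [Linear K C] where
  a : ∀ x y : C, (y ⟶ x) ⊗[K] (x ⟶ y)
  finite_support : ∀ x : C, {y : C | a x y ≠ 0}.Finite
  sum_comp : ∀ x : C, (∑ᶠ y : C, compMap K x x y (a x y)) = 𝟙 x
  compat : ∀ {x z : C} (f : x ⟶ z) (y : C),
    LinearMap.rTensor (x ⟶ y) (Linear.rightComp K y f) (a x y)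
      = LinearMap.lTensor (y ⟶ z) (Linear.leftComp K y f) (a z y)

section compMap

variable {K : Type*} [Field K] {C : Type*} [Category C] [Preadditive C] [Linear K C]

lemma compMap_tmul (X Y Z : C) (h : Z ⟶ X) (k : Y ⟶ Z) :
    compMap K X Y Z (h ⊗ₜ k) = k ≫ h := rfl

lemma compMap_rTensor_rightComp {x y z : C} (f : x ⟶ z) (t : (y ⟶ x) ⊗[K] (x ⟶ y)) :
    compMap K z x y (LinearMap.rTensor (x ⟶ y) (Linear.rightComp K y f) t)
      = compMap K x x y t ≫ f := by
  induction t using TensorProduct.induction_on with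
  | zero => simp
  | tmul g h => simp [compMap_tmul]
  | add t s ht hs => simp [ht, hs]

end compMap

namespace SeparabilityFamily

variable {K : Type*} [Field K] {C : Type*} [Category C] [Preadditive C] [Linear K C]

lemma a_eq_zero_of_subsingleton (S : SeparabilityFamily K C) {x y : C}
    (h : Subsingleton (y ⟶ x) ∨ Subsingleton (x ⟶ y)) : S.a x y = 0 := by
  rcases h with h | h <;> exact Subsingleton.elim _ _

lemma compMap_a_comp_eq_zero (S : SeparabilityFamily K C) {x z : C} (f : x ⟶ z) {y : C}
    (hzy : S.a z y = 0) : compMap K x x y (S.a x y) ≫ f = 0 := by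
  rw [← compMap_rTensor_rightComp, S.compat, hzy, map_zero, map_zero]

theorem eq_zero_of_forall_a_eq_zero_or (S : SeparabilityFamily K C) {x z : C} (f : x ⟶ z)
    (h : ∀ y, S.a x y = 0 ∨ S.a z y = 0) : f = 0 := by
  have hsupp : (Function.support fun y => compMap K x x y (S.a x y)).Finite :=
    (S.finite_support x).subset fun y hy hxy => hy (by simp only [hxy, map_zero])
  calc f = (∑ᶠ y, compMap K x x y (S.a x y)) ≫ f := by rw [S.sum_comp, Category.id_comp]
    _ = ∑ᶠ y, compMap K x x y (S.a x y) ≫ f :=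
      (Preadditive.rightComp x f).map_finsum hsupp
    _ = 0 := finsum_eq_zero_of_forall_eq_zero fun y => by
      rcases h y with hxy | hzy
      · rw [hxy, map_zero, Limits.zero_comp]
      · exact S.compMap_a_comp_eq_zero f hzy

open scoped Classical in
noncomputable def diagonal (hhom : ∀ x y : C, x ≠ y → Subsingleton (x ⟶ y))
    (hend : ∀ (x : C) (f : x ⟶ x), ∃ c : K, f = c • 𝟙 x) : SeparabilityFamily K C where
  a x := Pi.single (M := fun y => (y ⟶ x) ⊗[K] (x ⟶ y)) x (𝟙 x ⊗ₜ 𝟙 x)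
  finite_support x := (Set.finite_singleton x).subset fun y hy => by
    by_contra hyx
    exact hy (Pi.single_eq_of_ne hyx _)
  sum_comp x := by
    rw [finsum_eq_single _ x fun y hyx => by rw [Pi.single_eq_of_ne hyx, map_zero]]
    simp [compMap_tmul]
  compat {x z} f y := by
    by_cases hxz : x = z
    · subst hxz
      obtain ⟨c, rfl⟩ := hend x f
      by_cases hyx : y = x
      · subst hyx
        simp [TensorProduct.smul_tmul]
      · simp [Pi.single_eq_of_ne hyx]
    · obtain rfl : f = 0 := (hhom x z hxz).elim _ _
      have hright : Linear.rightComp K y (0 : x ⟶ z) = 0 :=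
        LinearMap.ext fun _ => Limits.comp_zero
      have hleft : Linear.leftComp K y (0 : x ⟶ z) = 0 :=
        LinearMap.ext fun _ => Limits.zero_comp
      simp only [hright, hleft, LinearMap.rTensor_zero, LinearMap.lTensor_zero,
        LinearMap.zero_apply]

end SeparabilityFamily

namespace CategoryTheory

namespace Free

variable (K : Type*) [CommRing K] {A : Type*} [Category A]

lemma subsingleton_hom_of_isEmpty {x y : A} [IsEmpty (x ⟶ y)] :
    Subsingleton (Free.of K x ⟶ Free.of K y) :=
  inferInstanceAs (Subsingleton ((x ⟶ y) →₀ K))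

lemma embedding_map_ne_zero [Nontrivial K] {x y : A} (f : x ⟶ y) :
    (Free.embedding K A).map f ≠ 0 :=
  Finsupp.single_ne_zero.mpr one_ne_zero

lemma exists_eq_smul_id {x : A} [Subsingleton (x ⟶ x)] (f : Free.of K x ⟶ Free.of K x) :
    ∃ c : K, f = c • 𝟙 (Free.of K x) := by
  let : Unique (x ⟶ x) := ⟨⟨𝟙 x⟩, fun _ => Subsingleton.elim _ _⟩
  exact ⟨_, (Finsupp.unique_single (show (x ⟶ x) →₀ K from f)).trans
    (Finsupp.smul_single_one _ _).symm⟩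

end Free

lemma Skeletal.isEmpty_hom_or_isEmpty_hom_of_ne {A : Type*} [Category A] (hskel : Skeletal A)
    (hdelta : ∀ (x : A) (f : x ⟶ x), f = 𝟙 x) {x y : A} (hxy : x ≠ y) :
    IsEmpty (x ⟶ y) ∨ IsEmpty (y ⟶ x) := by
  rw [or_iff_not_imp_left, not_isEmpty_iff]
  exact fun ⟨f⟩ => ⟨fun g => hxy (hskel ⟨⟨f, g, hdelta _ _, hdelta _ _⟩⟩)⟩

end CategoryTheory

lemma SeparabilityFamily.eq_of_hom_of_skeletal {K : Type*} [Field K] {A : Type*}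
    [SmallCategory A] (hskel : Skeletal A) (hdelta : ∀ (x : A) (f : x ⟶ x), f = 𝟙 x)
    (S : SeparabilityFamily K (Free K A)) {x z : A} (f : x ⟶ z) : x = z := by
  by_contra hxz
  have hvanish : ∀ u v : A, IsEmpty (u ⟶ v) ∨ IsEmpty (v ⟶ u) →
      S.a (Free.of K u) (Free.of K v) = 0 := by
    rintro u v (h | h)
    · exact S.a_eq_zero_of_subsingleton (.inr (Free.subsingleton_hom_of_isEmpty K))
    · exact S.a_eq_zero_of_subsingleton (.inl (Free.subsingleton_hom_of_isEmpty K))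
  refine Free.embedding_map_ne_zero K f (S.eq_zero_of_forall_a_eq_zero_or _ fun y => ?_)
  by_cases hyx : (y : A) = x
  · subst hyx
    exact .inr (hvanish z y (.inl
      ((hskel.isEmpty_hom_or_isEmpty_hom_of_ne hdelta hxz).resolve_left fun h => h.elim f)))
  · exact .inl (hvanish x y (hskel.isEmpty_hom_or_isEmpty_hom_of_ne hdelta (Ne.symm hyx)))

/-- For a delta category `A` (skeletal, and all endomorphisms are identities), the
linearization `K[A]` is separable iff `A` is discrete (every morphism is an identity). -/
theorem free_delta_separable_iff_discrete (K : Type*) [Field K]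
    (A : Type*) [SmallCategory A]
    (hskel : Skeletal A)
    (hdelta : ∀ (x : A) (f : x ⟶ x), f = 𝟙 x) :
    Nonempty (SeparabilityFamily K (Free K A)) ↔
      ∀ (x y : A) (f : x ⟶ y), ∃ h : x = y, f = eqToHom h := by
  constructor
  · rintro ⟨S⟩ x z f
    obtain rfl := S.eq_of_hom_of_skeletal hskel hdelta f
    exact ⟨rfl, hdelta x f⟩
  · intro hdiscrete
    refine ⟨SeparabilityFamily.diagonal (fun (x y : A) hxy => ?_) (fun (x : A) f => ?_)⟩
    · have : IsEmpty (x ⟶ y) := ⟨fun f => hxy (hdiscrete x y f).1⟩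
      exact Free.subsingleton_hom_of_isEmpty K
    · have : Subsingleton (x ⟶ x) := ⟨fun f g => (hdelta x f).trans (hdelta x g).symm⟩
      exact Free.exists_eq_smul_id K f
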